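/- arXiv:1205.6718 — 7 statements merged into one kernel-verified Lean document; each statement's English description precedes it below -/
import Mathlib

section
/- For any integer n > 2, the number of triples (x, y, z) in [1,n]^3 such that x < y < z and gcd(y−x, z−y, n) = 1 equals (n/6)·J₂(n) − (n/2)·J₁(n), where J_k is Jordan's totient function. -/
/-!
Writing `a = y - x` and `b = z - y`, the triples are counted by `∑ (n - a - b)` over the pairs
`(a, b) ∈ [1, n]²` with `gcd(a, b, n) = 1`. Möbius inversion over the divisors `d ∣ n` replaces
the coprimality condition by `d ∣ a, d ∣ b`, and the sum over those pairs is `d · C(n/d, 3)`.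
Since `d · C(n/d, 3) = n³/(6d²) - n²/(2d) + n/3`, `J_k(n) = n^k ∑_{d ∣ n} μ(d)/d^k` and
`∑_{d ∣ n} μ(d) = 0` for `n > 1`, the count is `(n/6) J₂(n) - (n/2) J₁(n)`.
-/

/-- Jordan's totient function of order `k`. -/
def jordanTotient (k n : ℕ) : ℚ :=
  (n : ℚ) ^ k * ∏ p ∈ n.primeFactors, (1 - 1 / (p : ℚ) ^ k)

open Finset ArithmeticFunction
open scoped ArithmeticFunction.Moebius

theorem sum_Icc_tsub_eq_sum_range {M : Type*} [AddCommMonoid M] {f : ℕ → M} (hf : f 0 = 0)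
    {k m : ℕ} (hkm : k ≤ m) : ∑ b ∈ Icc 1 m, f (k - b) = ∑ i ∈ range k, f i := by
  rw [← sum_subset (Icc_subset_Icc_right hkm) fun b hb hbk => by
    rw [mem_Icc] at hb hbk; rw [Nat.sub_eq_zero_of_le (by omega), hf]]
  refine sum_nbij' (k - ·) (k - ·) ?_ ?_ ?_ ?_ ?_ <;> intro b hb <;>
    simp only [mem_Icc, mem_range] at hb ⊢ <;> omega

theorem sum_range_choose_eq_choose_succ (k j : ℕ) :
    ∑ i ∈ range k, i.choose j = k.choose (j + 1) := by
  induction k with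
  | zero => simp
  | succ k ih => rw [sum_range_succ, ih, Nat.choose_succ_succ', add_comm]

theorem sum_Icc_sum_Icc_tsub_tsub (m : ℕ) :
    ∑ a ∈ Icc 1 m, ∑ b ∈ Icc 1 m, (m - a - b) = m.choose 3 := by
  have inner (a : ℕ) : ∑ b ∈ Icc 1 m, (m - a - b) = (m - a).choose 2 := by
    rw [sum_Icc_tsub_eq_sum_range (f := fun i => i) rfl (Nat.sub_le m a),
      ← sum_range_choose_eq_choose_succ]
    simp
  simp_rw [inner]
  rw [sum_Icc_tsub_eq_sum_range (f := (·.choose 2)) rfl le_rfl, sum_range_choose_eq_choose_succ]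

theorem Icc_filter_dvd_eq_image_mul {d : ℕ} (hd : d ≠ 0) (m : ℕ) :
    {x ∈ Icc 1 (d * m) | d ∣ x} = (Icc 1 m).image (d * ·) := by
  ext x
  simp only [mem_filter, mem_Icc, mem_image]
  constructor
  · rintro ⟨⟨hx1, hxm⟩, c, rfl⟩
    exact ⟨c, ⟨Nat.pos_of_mul_pos_left hx1, le_of_mul_le_mul_left hxm (by omega)⟩, rfl⟩
  · rintro ⟨c, ⟨hc1, hcm⟩, rfl⟩
    exact ⟨⟨Nat.mul_pos (by omega) hc1, by gcongr⟩, dvd_mul_right d c⟩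

theorem sum_Icc_product_filter_dvd_tsub_tsub {d : ℕ} (hd : d ≠ 0) (m : ℕ) :
    ∑ ab ∈ Icc 1 (d * m) ×ˢ Icc 1 (d * m) with d ∣ ab.1 ∧ d ∣ ab.2, (d * m - ab.1 - ab.2)
      = d * m.choose 3 := by
  have hinj : Set.InjOn (d * ·) (Icc 1 m) := (mul_right_injective₀ hd).injOn
  rw [filter_product (d ∣ ·) (d ∣ ·), sum_product]
  simp_rw [Icc_filter_dvd_eq_image_mul hd, sum_image hinj, ← Nat.mul_sub, ← mul_sum,
    sum_Icc_sum_Icc_tsub_tsub]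

theorem cast_choose_three {K : Type*} [Field K] [CharZero K] (m : ℕ) :
    (m.choose 3 : K) = m * (m - 1) * (m - 2) / 6 := by
  rw [Nat.cast_choose_eq_descPochhammer_div]
  simp [descPochhammer_succ_eval, Nat.factorial]

theorem card_increasing_triples_filter_gaps (n : ℕ) (P : ℕ → ℕ → Prop) [DecidableRel P] :
    #{p ∈ Icc 1 n ×ˢ Icc 1 n ×ˢ Icc 1 n |
        p.1 < p.2.1 ∧ p.2.1 < p.2.2 ∧ P (p.2.1 - p.1) (p.2.2 - p.2.1)}
      = ∑ ab ∈ Icc 1 n ×ˢ Icc 1 n with P ab.1 ab.2, (n - ab.1 - ab.2) := by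
  calc _ = #({ab ∈ Icc 1 n ×ˢ Icc 1 n | P ab.1 ab.2}.sigma
              fun ab => Icc 1 (n - ab.1 - ab.2)) := by
        refine card_nbij' (fun p => ⟨(p.2.1 - p.1, p.2.2 - p.2.1), p.1⟩)
          (fun q => (q.2, q.2 + q.1.1, q.2 + q.1.1 + q.1.2)) ?_ ?_ ?_ ?_
        all_goals
          intro q hq
          simp only [mem_coe, mem_filter, mem_product, mem_Icc, mem_sigma] at hq ⊢
          grind
    _ = _ := by simp [card_sigma]

theorem sum_divisors_moebius_eq_ite {R : Type*} [Ring R] (m : ℕ) :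
    ∑ d ∈ m.divisors, (μ d : R) = if m = 1 then 1 else 0 := by
  have h := congr_arg (· m) (coe_moebius_mul_coe_zeta (R := R))
  simpa only [coe_mul_zeta_apply, intCoe_apply, one_apply] using h

theorem sum_filter_eq_one_eq_sum_divisors_moebius {ι R : Type*} [CommRing R] (s : Finset ι)
    (f : ι → R) {g : ι → ℕ} {n : ℕ} (hn : n ≠ 0) (hg : ∀ i ∈ s, g i ∣ n) :
    ∑ i ∈ s with g i = 1, f i = ∑ d ∈ n.divisors, μ d * ∑ i ∈ s with d ∣ g i, f i := by
  simp_rw [sum_filter, mul_sum]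
  rw [sum_comm]
  refine sum_congr rfl fun i hi => ?_
  simp_rw [mul_ite, mul_zero, ← sum_filter, ← sum_mul,
    Nat.divisors_filter_dvd_of_dvd hn (hg i hi), sum_divisors_moebius_eq_ite, ite_mul, one_mul,
    zero_mul]

theorem sum_divisors_moebius_mul_eq_prod_one_sub {R : Type*} [CommRing R]
    {f : ArithmeticFunction R} (hf : f.IsMultiplicative) {n : ℕ} (hn : n ≠ 0) :
    ∑ d ∈ n.divisors, μ d * f d = ∏ p ∈ n.primeFactors, (1 - f p) := by
  rw [← Nat.primeFactors_radical, hf.prodPrimeFactors_one_sub_of_squarefree _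
    UniqueFactorizationMonoid.squarefree_radical]
  refine (sum_subset (Nat.divisors_subset_of_dvd hn UniqueFactorizationMonoid.radical_dvd_self)
    fun d hdn hdr => ?_).symm
  have hd : d ∣ n := Nat.dvd_of_mem_divisors hdn
  have hsq : ¬Squarefree d := fun hsq => hdr <| Nat.mem_divisors.2
    ⟨(UniqueFactorizationMonoid.dvd_radical_iff hsq.isRadical hn).2 hd,
      UniqueFactorizationMonoid.radical_ne_zero⟩
  rw [moebius_eq_zero_of_not_squarefree hsq, Int.cast_zero, zero_mul]

theorem jordanTotient_eq_sum_divisors_moebius {k : ℕ} (hk : k ≠ 0) {n : ℕ} (hn : n ≠ 0) :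
    jordanTotient k n = n ^ k * ∑ d ∈ n.divisors, μ d / (d : ℚ) ^ k := by
  let f : ArithmeticFunction ℚ := ⟨fun d => 1 / (d : ℚ) ^ k, by simp [hk]⟩
  have hf : f.IsMultiplicative := ⟨by simp [f], fun _ => by
    simp only [f, coe_mk, Nat.cast_mul, mul_pow, one_div_mul_one_div]⟩
  simp_rw [jordanTotient, div_eq_mul_one_div (μ _ : ℚ)]
  exact congr_arg _ (sum_divisors_moebius_mul_eq_prod_one_sub hf hn).symm

/-- For `n > 2`, the number of triples `(x,y,z)` in `[1,n]³` with `x < y < z` and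
`gcd(y−x, z−y, n) = 1` equals `(n/6)·J₂(n) − (n/2)·J₁(n)`. -/
theorem stmt_1 (n : ℕ) (hn : 2 < n) :
    (((Finset.Icc 1 n ×ˢ Finset.Icc 1 n ×ˢ Finset.Icc 1 n).filter
      (fun p => p.1 < p.2.1 ∧ p.2.1 < p.2.2 ∧
        Nat.gcd (p.2.1 - p.1) (Nat.gcd (p.2.2 - p.2.1) n) = 1)).card : ℚ)
      = (n : ℚ) / 6 * jordanTotient 2 n - (n : ℚ) / 2 * jordanTotient 1 n := by
  have hn0 : n ≠ 0 := by omega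
  have summand (d : ℕ) (hd : d ∈ n.divisors) :
      μ d * ∑ ab ∈ Icc 1 n ×ˢ Icc 1 n with d ∣ Nat.gcd ab.1 (Nat.gcd ab.2 n),
        ((n - ab.1 - ab.2 : ℕ) : ℚ)
        = n / 6 * (n ^ 2 * (μ d / d ^ 2)) - n / 2 * (n ^ 1 * (μ d / d ^ 1)) + n / 3 * μ d := by
    obtain ⟨⟨m, rfl⟩, -⟩ := Nat.mem_divisors.1 hd
    have hd0 : d ≠ 0 := left_ne_zero_of_mul hn0
    simp_rw [Nat.dvd_gcd_iff, dvd_mul_right, and_true, ← Nat.cast_sum,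
      sum_Icc_product_filter_dvd_tsub_tsub hd0, Nat.cast_mul, cast_choose_three]
    field_simp
    ring
  rw [card_increasing_triples_filter_gaps n (fun a b => Nat.gcd a (Nat.gcd b n) = 1),
    Nat.cast_sum, sum_filter_eq_one_eq_sum_divisors_moebius _ _ hn0
      fun ab _ => Nat.gcd_dvd_right _ _ |>.trans (Nat.gcd_dvd_right _ _),
    sum_congr rfl summand, sum_add_distrib, sum_sub_distrib, ← mul_sum, ← mul_sum, ← mul_sum,
    ← mul_sum, ← mul_sum, ← jordanTotient_eq_sum_divisors_moebius two_ne_zero hn0,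
    ← jordanTotient_eq_sum_divisors_moebius one_ne_zero hn0, sum_divisors_moebius_eq_ite,
    if_neg (by omega), mul_zero, add_zero]
end

section
/- For every positive integer n, ∑_{k=1}^{n−1} σ(k)·σ(n−k) = (5/12)·σ₃(n) + (1/12)·σ(n) − (1/2)·n·σ(n), where σ_m(n) denotes the sum of m-th powers of the divisors of n and σ = σ₁. -/
/-!
Write `σ(k) σ(n - k)` as the sum of `a * b` over the quadruples `((a, x), (b, y))` of positive
integers with `a * x = k`, `b * y = n - k`. Liouville's method: the shear
`(a, x, b, y) ↦ (a, x - y, a + b, y)` maps `{y < x}` bijectively onto `{a < b}`, and with the swap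
`(a, x) ↔ (b, y)` it shows that for every `g` the sums of `g a b` over the diagonals `a = b` and
`x = y` differ by a sum over `y < x` of `g a b + g b a - g a (a + b) - g (a + b) a`. For
`g a b = a² - a b + b²` that summand is `-4 a b`, so the convolution is expressed through the two
diagonals, which are explicit divisor sums: `a (x + y) = n` on the first and `(a + b) x = n` on
the second.
-/

/-- `σₘ(n) = ∑_{d ∣ n} dᵐ`. -/
def sigmaFn (m n : ℕ) : ℕ := ∑ d ∈ n.divisors, d ^ m

open Finset

theorem Finset.sum_filter_lt_add_sum_filter_eq_add_sum_filter_gt {ι α M : Type*}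
    [LinearOrder α] [AddCommMonoid M] (s : Finset ι) (f g : ι → α) (F : ι → M) :
    ∑ i ∈ s.filter (fun i => f i < g i), F i + ∑ i ∈ s.filter (fun i => f i = g i), F i
      + ∑ i ∈ s.filter (fun i => g i < f i), F i = ∑ i ∈ s, F i := by
  rw [add_assoc, ← sum_filter_add_sum_filter_not s fun i => f i < g i,
    ← sum_filter_add_sum_filter_not (s.filter fun i => ¬f i < g i) fun i => f i = g i,
    filter_filter, filter_filter]
  congr 3 <;> exact filter_congr fun i _ => by grind

namespace SigmaConvolution

def quads (n : ℕ) : Finset ((ℕ × ℕ) × ℕ × ℕ) :=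
  (Ico 1 n).biUnion fun k => k.divisorsAntidiagonal ×ˢ (n - k).divisorsAntidiagonal

variable {n : ℕ} {M : Type*}

theorem mem_quads {a x b y : ℕ} :
    ((a, x), (b, y)) ∈ quads n ↔ 0 < a ∧ 0 < x ∧ 0 < b ∧ 0 < y ∧ a * x + b * y = n := by
  simp only [quads, mem_biUnion, mem_Ico, mem_product, Nat.mem_divisorsAntidiagonal,
    ← Nat.pos_iff_ne_zero]
  constructor
  · rintro ⟨k, ⟨-, hkn⟩, ⟨rfl, hk⟩, hby, hnk⟩
    obtain ⟨ha, hx⟩ := CanonicallyOrderedAdd.mul_pos.mp hk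
    obtain ⟨hb, hy⟩ := CanonicallyOrderedAdd.mul_pos.mp (hby ▸ hnk)
    exact ⟨ha, hx, hb, hy, by omega⟩
  · rintro ⟨ha, hx, hb, hy, rfl⟩
    have := Nat.mul_pos ha hx
    have := Nat.mul_pos hb hy
    exact ⟨a * x, ⟨by omega, by omega⟩, ⟨rfl, by omega⟩, by omega, by omega⟩

theorem sum_Ico_mul_eq_sum_quads [CommSemiring M] (f g : ℕ → M) :
    ∑ k ∈ Ico 1 n, (∑ d ∈ k.divisors, f d) * (∑ e ∈ (n - k).divisors, g e)
      = ∑ p ∈ quads n, f p.1.1 * g p.2.1 := by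
  have hdisj : Set.PairwiseDisjoint (Ico 1 n : Set ℕ)
      fun k => k.divisorsAntidiagonal ×ˢ (n - k).divisorsAntidiagonal := by
    intro k _ l _ hkl
    refine disjoint_left.mpr fun p hk hl => hkl ?_
    rw [mem_product, Nat.mem_divisorsAntidiagonal] at hk hl
    exact hk.1.1.symm.trans hl.1.1
  rw [quads, sum_biUnion hdisj]
  refine sum_congr rfl fun k _ => ?_
  rw [sum_product, ← Nat.sum_divisorsAntidiagonal fun d _ => f d,
    ← Nat.sum_divisorsAntidiagonal fun e _ => g e, sum_mul_sum]

theorem swap_mem_quads {p : (ℕ × ℕ) × ℕ × ℕ} : p.swap ∈ quads n ↔ p ∈ quads n := by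
  obtain ⟨⟨a, x⟩, b, y⟩ := p
  simp only [Prod.swap_prod_mk, mem_quads]
  omega

theorem map_swap_mem_quads {p : (ℕ × ℕ) × ℕ × ℕ} :
    Prod.map Prod.swap Prod.swap p ∈ quads n ↔ p ∈ quads n := by
  obtain ⟨⟨a, x⟩, b, y⟩ := p
  simp only [Prod.map_apply, Prod.swap_prod_mk, mem_quads]
  constructor <;> rintro ⟨h₁, h₂, h₃, h₄, h₅⟩ <;> exact ⟨h₂, h₁, h₄, h₃, by linarith⟩

theorem sum_quads_filter_swap [AddCommMonoid M] (P : (ℕ × ℕ) × ℕ × ℕ → Prop) [DecidablePred P]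
    (F : (ℕ × ℕ) × ℕ × ℕ → M) :
    ∑ p ∈ (quads n).filter (fun p => P p.swap), F p.swap = ∑ p ∈ (quads n).filter P, F p :=
  sum_equiv (Equiv.prodComm _ _) (fun p => by simp [swap_mem_quads]) fun _ _ => rfl

theorem sum_quads_filter_lt_shear [AddCommMonoid M] (F : (ℕ × ℕ) × ℕ × ℕ → M) :
    ∑ p ∈ (quads n).filter (fun p => p.2.2 < p.1.2),
        F ((p.1.1, p.1.2 - p.2.2), (p.1.1 + p.2.1, p.2.2))
      = ∑ p ∈ (quads n).filter (fun p => p.1.1 < p.2.1), F p := by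
  refine sum_nbij' (fun p => ((p.1.1, p.1.2 - p.2.2), (p.1.1 + p.2.1, p.2.2)))
    (fun p => ((p.1.1, p.1.2 + p.2.2), (p.2.1 - p.1.1, p.2.2))) ?_ ?_ ?_ ?_ fun _ _ => rfl
  · rintro ⟨⟨a, x⟩, b, y⟩ hp
    simp only [mem_filter, mem_quads] at hp ⊢
    obtain ⟨⟨ha, hx, hb, hy, rfl⟩, hyx⟩ := hp
    refine ⟨⟨ha, by omega, by omega, hy, ?_⟩, by omega⟩
    zify [hyx.le]
    ring
  · rintro ⟨⟨a, x⟩, b, y⟩ hp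
    simp only [mem_filter, mem_quads] at hp ⊢
    obtain ⟨⟨ha, hx, hb, hy, rfl⟩, hab⟩ := hp
    refine ⟨⟨ha, by omega, by omega, hy, ?_⟩, by omega⟩
    zify [hab.le]
    ring
  · rintro ⟨⟨a, x⟩, b, y⟩ hp
    simp only [mem_filter] at hp
    simp only [Prod.mk.injEq, true_and, and_true]
    omega
  · rintro ⟨⟨a, x⟩, b, y⟩ hp
    simp only [mem_filter] at hp
    simp only [Prod.mk.injEq, true_and, and_true]
    omega

theorem sum_quads_filter_fst_eq_sub_sum_quads_filter_snd_eq [AddCommGroup M] (g : ℕ → ℕ → M) :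
    ∑ p ∈ (quads n).filter (fun p => p.1.1 = p.2.1), g p.1.1 p.2.1
        - ∑ p ∈ (quads n).filter (fun p => p.1.2 = p.2.2), g p.1.1 p.2.1
      = ∑ p ∈ (quads n).filter (fun p => p.2.2 < p.1.2),
          (g p.1.1 p.2.1 + g p.2.1 p.1.1 - g p.1.1 (p.1.1 + p.2.1) - g (p.1.1 + p.2.1) p.1.1) := by
  have hab := sum_filter_lt_add_sum_filter_eq_add_sum_filter_gt (quads n)
    (fun p => p.1.1) (fun p => p.2.1) fun p => g p.1.1 p.2.1
  have hxy := sum_filter_lt_add_sum_filter_eq_add_sum_filter_gt (quads n)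
    (fun p => p.1.2) (fun p => p.2.2) fun p => g p.1.1 p.2.1
  have hlt := sum_quads_filter_lt_shear (n := n) fun p => g p.1.1 p.2.1
  have hgt := sum_quads_filter_lt_shear (n := n) fun p => g p.2.1 p.1.1
  have hgt' := sum_quads_filter_swap (n := n) (fun p => p.1.1 < p.2.1) fun p => g p.2.1 p.1.1
  have hxy' := sum_quads_filter_swap (n := n) (fun p => p.2.2 < p.1.2) fun p => g p.2.1 p.1.1
  simp only [Prod.fst_swap, Prod.snd_swap] at hgt' hxy'
  rw [sum_sub_distrib, sum_sub_distrib, sum_add_distrib, hlt, hgt, ← hgt', ← hxy']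
  rw [← hxy] at hab
  linear_combination (norm := abel) hab

theorem sum_quads_filter_fst_eq [AddCommMonoid M] (F : (ℕ × ℕ) × ℕ × ℕ → M) :
    ∑ p ∈ (quads n).filter (fun p => p.1.1 = p.2.1), F p
      = ∑ d ∈ n.divisors, ∑ c ∈ Ico 1 (n / d), F ((d, c), (d, n / d - c)) := by
  have hinv : ∀ p ∈ (quads n).filter (fun p => p.1.1 = p.2.1),
      ((p.1.1, p.1.2), (p.1.1, n / p.1.1 - p.1.2)) = p := by
    rintro ⟨⟨a, x⟩, b, y⟩ hp
    simp only [mem_filter, mem_quads] at hp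
    obtain ⟨⟨ha, -, -, -, rfl⟩, rfl⟩ := hp
    simp only [← mul_add, Nat.mul_div_cancel_left _ ha, Nat.add_sub_cancel_left]
  rw [sum_sigma']
  refine sum_nbij' (fun p => ⟨p.1.1, p.1.2⟩) (fun t => ((t.1, t.2), (t.1, n / t.1 - t.2)))
    ?_ ?_ hinv (fun _ _ => rfl) fun p hp => congrArg F (hinv p hp).symm
  · rintro ⟨⟨a, x⟩, b, y⟩ hp
    simp only [mem_filter, mem_quads] at hp
    obtain ⟨⟨ha, hx, -, hy, rfl⟩, rfl⟩ := hp
    simp only [mem_sigma, Nat.mem_divisors, mem_Ico, ← mul_add,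
      Nat.mul_div_cancel_left _ ha]
    exact ⟨⟨dvd_mul_right _ _, by positivity⟩, hx, by omega⟩
  · rintro ⟨d, c⟩ ht
    simp only [mem_sigma, Nat.mem_divisors, mem_Ico] at ht
    obtain ⟨⟨hd, hn⟩, hc, hcn⟩ := ht
    simp only [mem_filter, mem_quads, and_true]
    refine ⟨Nat.pos_of_dvd_of_pos hd (by omega), hc, Nat.pos_of_dvd_of_pos hd (by omega),
      by omega, ?_⟩
    rw [← mul_add, Nat.add_sub_cancel' hcn.le, Nat.mul_div_cancel' hd]

theorem sum_quads_filter_snd_eq [AddCommMonoid M] (F : (ℕ × ℕ) × ℕ × ℕ → M) :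
    ∑ p ∈ (quads n).filter (fun p => p.1.2 = p.2.2), F p
      = ∑ d ∈ n.divisors, ∑ c ∈ Ico 1 (n / d), F ((c, d), (n / d - c, d)) := by
  refine (sum_equiv ((Equiv.prodComm ℕ ℕ).prodCongr (Equiv.prodComm ℕ ℕ)) (fun p => ?_)
    fun p _ => rfl).trans (sum_quads_filter_fst_eq (F ∘ Prod.map Prod.swap Prod.swap))
  simp [map_swap_mem_quads]

theorem two_mul_sum_quads_mul :
    2 * ∑ p ∈ quads n, (p.1.1 * p.2.1 : ℚ)
      = ∑ p ∈ (quads n).filter (fun p => p.1.2 = p.2.2),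
          ((p.1.1 : ℚ) ^ 2 + p.1.1 * p.2.1 + (p.2.1 : ℚ) ^ 2)
        - ∑ p ∈ (quads n).filter (fun p => p.1.1 = p.2.1),
          ((p.1.1 : ℚ) ^ 2 - p.1.1 * p.2.1 + (p.2.1 : ℚ) ^ 2) := by
  have hliouville := sum_quads_filter_fst_eq_sub_sum_quads_filter_snd_eq (n := n)
    fun a b : ℕ => (a : ℚ) ^ 2 - a * b + (b : ℚ) ^ 2
  have hxy := sum_filter_lt_add_sum_filter_eq_add_sum_filter_gt (quads n)
    (fun p => p.1.2) (fun p => p.2.2) fun p => (p.1.1 * p.2.1 : ℚ)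
  have hswap := sum_quads_filter_swap (n := n) (fun p => p.2.2 < p.1.2)
    fun p => (p.1.1 * p.2.1 : ℚ)
  simp only [Prod.fst_swap, Prod.snd_swap] at hswap
  have hsymm : ∑ p ∈ (quads n).filter (fun p => p.1.2 < p.2.2), (p.1.1 * p.2.1 : ℚ)
      = ∑ p ∈ (quads n).filter (fun p => p.2.2 < p.1.2), (p.1.1 * p.2.1 : ℚ) := by
    rw [← hswap]
    exact sum_congr rfl fun p _ => mul_comm _ _
  have hoff : ∑ p ∈ (quads n).filter (fun p => p.2.2 < p.1.2),
      ((p.1.1 : ℚ) ^ 2 - p.1.1 * p.2.1 + (p.2.1 : ℚ) ^ 2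
        + ((p.2.1 : ℚ) ^ 2 - p.2.1 * p.1.1 + (p.1.1 : ℚ) ^ 2)
        - ((p.1.1 : ℚ) ^ 2 - p.1.1 * ↑(p.1.1 + p.2.1) + (↑(p.1.1 + p.2.1) : ℚ) ^ 2)
        - ((↑(p.1.1 + p.2.1) : ℚ) ^ 2 - ↑(p.1.1 + p.2.1) * p.1.1 + (p.1.1 : ℚ) ^ 2))
      = -4 * ∑ p ∈ (quads n).filter (fun p => p.2.2 < p.1.2), (p.1.1 * p.2.1 : ℚ) := by
    rw [mul_sum]
    refine sum_congr rfl fun p _ => ?_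
    push_cast
    ring
  have hdiag : ∑ p ∈ (quads n).filter (fun p => p.1.2 = p.2.2),
        ((p.1.1 : ℚ) ^ 2 + p.1.1 * p.2.1 + (p.2.1 : ℚ) ^ 2)
      = ∑ p ∈ (quads n).filter (fun p => p.1.2 = p.2.2),
          ((p.1.1 : ℚ) ^ 2 - p.1.1 * p.2.1 + (p.2.1 : ℚ) ^ 2)
        + 2 * ∑ p ∈ (quads n).filter (fun p => p.1.2 = p.2.2), (p.1.1 * p.2.1 : ℚ) := by
    rw [mul_sum, ← sum_add_distrib]
    exact sum_congr rfl fun p _ => by ring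
  rw [← hxy]
  linear_combination 2 * hsymm + hliouville + hoff - hdiag

theorem sum_quads_filter_fst_eq_sq_sub_mul_add_sq :
    ∑ p ∈ (quads n).filter (fun p => p.1.1 = p.2.1),
        ((p.1.1 : ℚ) ^ 2 - p.1.1 * p.2.1 + (p.2.1 : ℚ) ^ 2)
      = n * ∑ d ∈ n.divisors, (d : ℚ) - ∑ d ∈ n.divisors, (d : ℚ) ^ 2 := by
  rw [sum_quads_filter_fst_eq, mul_sum, ← sum_sub_distrib]
  refine sum_congr rfl fun d hd => ?_
  have hcofactor : ((n / d : ℕ) : ℚ) * d = n := by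
    rw [← Nat.cast_mul, Nat.div_mul_cancel (Nat.dvd_of_mem_divisors hd)]
  dsimp only
  rw [sum_const, Nat.card_Ico, nsmul_eq_mul,
    Nat.cast_sub (Nat.div_pos (Nat.divisor_le hd) (Nat.pos_of_mem_divisors hd))]
  linear_combination (d : ℚ) * hcofactor

theorem sum_Ico_sq_add_mul_add_sq (e : ℕ) :
    ∑ c ∈ Ico 1 e, ((c : ℚ) ^ 2 + c * ((e - c : ℕ) : ℚ) + ((e - c : ℕ) : ℚ) ^ 2)
      = (5 * (e : ℚ) ^ 3 - 6 * (e : ℚ) ^ 2 + e) / 6 := by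
  rcases e.eq_zero_or_pos with rfl | he
  · simp
  have hid : ∀ m : ℕ, ∑ c ∈ range m, (c : ℚ) = m * (m - 1) / 2 := by
    intro m
    induction m with
    | zero => simp
    | succ m ih => rw [sum_range_succ, ih]; push_cast; ring
  have hsq : ∀ m : ℕ, ∑ c ∈ range m, (c : ℚ) ^ 2 = m * (m - 1) * (2 * m - 1) / 6 := by
    intro m
    induction m with
    | zero => simp
    | succ m ih => rw [sum_range_succ, ih]; push_cast; ring
  have hrange := sum_range_eq_add_Ico (fun c : ℕ => (e : ℚ) ^ 2 - e * c + (c : ℚ) ^ 2) he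
  rw [sum_congr rfl (g := fun c : ℕ => (e : ℚ) ^ 2 - e * c + (c : ℚ) ^ 2) fun c hc => by
    rw [Nat.cast_sub (mem_Ico.mp hc).2.le]; ring]
  simp only [sum_add_distrib, sum_sub_distrib, sum_const, card_range, nsmul_eq_mul, ← mul_sum,
    hid, hsq] at hrange ⊢
  linear_combination -hrange

theorem sum_quads_filter_snd_eq_sq_add_mul_add_sq :
    ∑ p ∈ (quads n).filter (fun p => p.1.2 = p.2.2),
        ((p.1.1 : ℚ) ^ 2 + p.1.1 * p.2.1 + (p.2.1 : ℚ) ^ 2)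
      = (5 * ∑ d ∈ n.divisors, (d : ℚ) ^ 3 - 6 * ∑ d ∈ n.divisors, (d : ℚ) ^ 2
          + ∑ d ∈ n.divisors, (d : ℚ)) / 6 := by
  rw [sum_quads_filter_snd_eq]
  simp only [sum_Ico_sq_add_mul_add_sq]
  rw [Nat.sum_div_divisors n fun e => (5 * (e : ℚ) ^ 3 - 6 * (e : ℚ) ^ 2 + e) / 6, ← sum_div,
    sum_add_distrib, sum_sub_distrib, mul_sum, mul_sum]

theorem sum_quads_mul :
    ∑ p ∈ quads n, (p.1.1 * p.2.1 : ℚ)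
      = 5 / 12 * ∑ d ∈ n.divisors, (d : ℚ) ^ 3 + 1 / 12 * ∑ d ∈ n.divisors, (d : ℚ)
        - 1 / 2 * n * ∑ d ∈ n.divisors, (d : ℚ) := by
  linear_combination (two_mul_sum_quads_mul (n := n) + sum_quads_filter_snd_eq_sq_add_mul_add_sq
    - sum_quads_filter_fst_eq_sq_sub_mul_add_sq) / 2

end SigmaConvolution

theorem stmt_7_general (n : ℕ) :
    ∑ k ∈ Finset.Ico 1 n, (sigmaFn 1 k : ℚ) * (sigmaFn 1 (n - k) : ℚ)
      = 5 / 12 * (sigmaFn 3 n : ℚ) + 1 / 12 * (sigmaFn 1 n : ℚ)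
        - 1 / 2 * (n : ℚ) * (sigmaFn 1 n : ℚ) := by
  have hcast (m k : ℕ) : (sigmaFn m k : ℚ) = ∑ d ∈ k.divisors, (d : ℚ) ^ m := by
    simp [sigmaFn]
  simp only [hcast, pow_one]
  rw [SigmaConvolution.sum_Ico_mul_eq_sum_quads, SigmaConvolution.sum_quads_mul]

/-- Ramanujan's formula:
`∑_{k=1}^{n−1} σ(k)σ(n−k) = (5/12)σ₃(n) + (1/12)σ(n) − (1/2)nσ(n)`. -/
theorem stmt_7 (n : ℕ) (hn : 0 < n) :
    ∑ k ∈ Finset.Ico 1 n, (sigmaFn 1 k : ℚ) * (sigmaFn 1 (n - k) : ℚ)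
      = 5 / 12 * (sigmaFn 3 n : ℚ) + 1 / 12 * (sigmaFn 1 n : ℚ)
        - 1 / 2 * (n : ℚ) * (sigmaFn 1 n : ℚ) :=
  stmt_7_general n
end

section
/- For any positive integer c, the sum of k·ℓ over all quadruples of positive integers (a, b, k, ℓ) with k < ℓ and a·k + b·ℓ = c equals (5/24)·σ₃(c) + (1/2)·σ₂(c) + (1/24 − 3c/4)·σ₁(c). -/
open Finset

def solutions (c : ℕ) : Finset (ℕ × ℕ × ℕ × ℕ) :=
  (Icc 1 c ×ˢ Icc 1 c ×ˢ Icc 1 c ×ˢ Icc 1 c).filter fun q =>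
    q.1 * q.2.2.1 + q.2.1 * q.2.2.2 = c

theorem mem_solutions {c a b k l : ℕ} :
    (a, b, k, l) ∈ solutions c ↔ 0 < a ∧ 0 < b ∧ 0 < k ∧ 0 < l ∧ a * k + b * l = c := by
  simp only [solutions, mem_filter, mem_product, mem_Icc]
  constructor
  · rintro ⟨⟨⟨ha, -⟩, ⟨hb, -⟩, ⟨hk, -⟩, ⟨hl, -⟩⟩, he⟩
    exact ⟨ha, hb, hk, hl, he⟩
  · rintro ⟨ha, hb, hk, hl, rfl⟩
    refine ⟨⟨⟨ha, ?_⟩, ⟨hb, ?_⟩, ⟨hk, ?_⟩, ⟨hl, ?_⟩⟩, rfl⟩ <;> nlinarith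

theorem sum_filter_lt_add_sum_filter_lt_add_sum_filter_eq {α β M : Type*} [LinearOrder β]
    [AddCommMonoid M] (s : Finset α) (u v : α → β) (f : α → M) :
    ∑ x ∈ s.filter (fun x => u x < v x), f x + ∑ x ∈ s.filter (fun x => v x < u x), f x
      + ∑ x ∈ s.filter (fun x => u x = v x), f x = ∑ x ∈ s, f x := by
  rw [← sum_filter_add_sum_filter_not s (fun x => u x < v x) f,
    ← sum_filter_add_sum_filter_not (s.filter fun x => ¬u x < v x) (fun x => v x < u x) f,
    filter_filter, filter_filter, add_assoc]
  congr 3 <;> apply filter_congr <;> intro x _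
  · exact ⟨fun h => ⟨h.not_gt, h⟩, And.right⟩
  · exact ⟨fun h => ⟨h.not_lt, h.symm.not_lt⟩,
      fun h => le_antisymm (not_lt.1 h.2) (not_lt.1 h.1)⟩

section

variable {M : Type*} [AddCommMonoid M] (F : ℕ → ℕ → M) (c : ℕ)

theorem sum_solutions_swap (hF : ∀ x y, F x y = F y x) :
    ∑ q ∈ (solutions c).filter (fun q => q.2.2.2 < q.2.2.1), F q.2.2.1 q.2.2.2
      = ∑ q ∈ (solutions c).filter (fun q => q.2.2.1 < q.2.2.2), F q.2.2.1 q.2.2.2 := by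
  refine sum_nbij' (fun q => (q.2.1, q.1, q.2.2.2, q.2.2.1))
    (fun q => (q.2.1, q.1, q.2.2.2, q.2.2.1))
    ?_ ?_ (fun _ _ => rfl) (fun _ _ => rfl) fun _ _ => hF _ _
  all_goals
    rintro ⟨a, b, k, l⟩ h
    simp only [mem_filter, mem_solutions] at h ⊢
    obtain ⟨⟨ha, hb, hk, hl, rfl⟩, hlt⟩ := h
    exact ⟨⟨hb, ha, hl, hk, by ring⟩, hlt⟩

theorem sum_solutions_filter_lt_left :
    ∑ q ∈ (solutions c).filter (fun q => q.2.1 < q.1), F q.2.2.1 q.2.2.2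
      = ∑ q ∈ (solutions c).filter (fun q => q.2.2.1 < q.2.2.2),
          F q.2.2.1 (q.2.2.2 - q.2.2.1) := by
  refine sum_nbij' (fun q => (q.1 - q.2.1, q.2.1, q.2.2.1, q.2.2.1 + q.2.2.2))
    (fun q => (q.1 + q.2.1, q.2.1, q.2.2.1, q.2.2.2 - q.2.2.1)) ?mem ?mem' ?inv ?inv' ?val <;>
    rintro ⟨a, b, k, l⟩ h <;> simp only [mem_filter, mem_solutions] at h ⊢
  case mem | mem' =>
    obtain ⟨⟨ha, hb, hk, hl, rfl⟩, hlt⟩ := h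
    refine ⟨⟨by omega, hb, hk, by omega, ?_⟩, by omega⟩
    zify [hlt.le]
    ring
  case inv | inv' =>
    simp only [Prod.mk.injEq, true_and]
    omega
  case val => congr 1; omega

theorem sum_solutions_filter_lt_right :
    ∑ q ∈ (solutions c).filter (fun q => q.1 < q.2.1), F q.2.2.1 q.2.2.2
      = ∑ q ∈ (solutions c).filter (fun q => q.2.2.2 < q.2.2.1),
          F (q.2.2.1 - q.2.2.2) q.2.2.2 := by
  refine sum_nbij' (fun q => (q.1, q.2.1 - q.1, q.2.2.1 + q.2.2.2, q.2.2.2))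
    (fun q => (q.1, q.2.1 + q.1, q.2.2.1 - q.2.2.2, q.2.2.2)) ?mem ?mem' ?inv ?inv' ?val <;>
    rintro ⟨a, b, k, l⟩ h <;> simp only [mem_filter, mem_solutions] at h ⊢
  case mem | mem' =>
    obtain ⟨⟨ha, hb, hk, hl, rfl⟩, hlt⟩ := h
    refine ⟨⟨ha, by omega, by omega, hl, ?_⟩, by omega⟩
    zify [hlt.le]
    ring
  case inv | inv' =>
    simp only [Prod.mk.injEq, true_and, and_true]
    omega
  case val => congr 1; omega

theorem sum_solutions_filter_eq_left :
    ∑ q ∈ (solutions c).filter (fun q => q.1 = q.2.1), F q.2.2.1 q.2.2.2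
      = ∑ d ∈ c.divisors, ∑ j ∈ Ico 1 d, F j (d - j) := by
  rw [sum_sigma']
  refine sum_nbij' (fun q => ⟨q.2.2.1 + q.2.2.2, q.2.2.1⟩)
    (fun x => (c / x.1, c / x.1, x.2, x.1 - x.2)) ?_ ?_ ?_ ?_ ?_
  · rintro ⟨a, b, k, l⟩ h
    simp only [mem_filter, mem_solutions, mem_sigma, Nat.mem_divisors, mem_Ico] at h ⊢
    obtain ⟨⟨ha, -, hk, hl, rfl⟩, rfl⟩ := h
    exact ⟨⟨Dvd.intro_left a (by ring), by positivity⟩, hk, by omega⟩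
  · rintro ⟨d, j⟩ h
    simp only [mem_filter, mem_solutions, mem_sigma, Nat.mem_divisors, mem_Ico] at h ⊢
    obtain ⟨⟨hdvd, hc⟩, hj, hjd⟩ := h
    have hcd : 0 < c / d := Nat.div_pos (Nat.le_of_dvd (Nat.pos_of_ne_zero hc) hdvd) (by omega)
    refine ⟨⟨hcd, hcd, hj, by omega, ?_⟩, trivial⟩
    rw [← mul_add, Nat.add_sub_cancel' hjd.le, Nat.div_mul_cancel hdvd]
  · rintro ⟨a, b, k, l⟩ h
    simp only [mem_filter, mem_solutions] at h
    obtain ⟨⟨ha, -, hk, hl, rfl⟩, rfl⟩ := h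
    rw [← mul_add, Nat.mul_div_cancel _ (by omega)]
    simp only [Prod.mk.injEq, true_and]
    omega
  · rintro ⟨d, j⟩ h
    simp only [mem_sigma, mem_Ico] at h
    simp only [Nat.add_sub_cancel' h.2.2.le]
  · rintro ⟨a, b, k, l⟩ -
    rw [Nat.add_sub_cancel_left]

theorem sum_solutions_filter_eq_right :
    ∑ q ∈ (solutions c).filter (fun q => q.2.2.1 = q.2.2.2), F q.2.2.1 q.2.2.2
      = ∑ d ∈ c.divisors, (c / d - 1) • F d d := by
  simp_rw [← Nat.card_Ico 1 (c / _), ← sum_const]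
  rw [sum_sigma']
  refine sum_nbij' (fun q => ⟨q.2.2.1, q.1⟩)
    (fun x => (x.2, c / x.1 - x.2, x.1, x.1)) ?_ ?_ ?_ ?_ ?_
  · rintro ⟨a, b, k, l⟩ h
    simp only [mem_filter, mem_solutions, mem_sigma, Nat.mem_divisors, mem_Ico] at h ⊢
    obtain ⟨⟨ha, hb, hk, -, rfl⟩, rfl⟩ := h
    rw [← add_mul, Nat.mul_div_cancel _ hk]
    exact ⟨⟨Dvd.intro_left _ rfl, by positivity⟩, ha, by omega⟩
  · rintro ⟨d, j⟩ h
    simp only [mem_filter, mem_solutions, mem_sigma, Nat.mem_divisors, mem_Ico] at h ⊢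
    obtain ⟨⟨hdvd, hc⟩, hj, hjd⟩ := h
    have hd : 0 < d := Nat.pos_of_dvd_of_pos hdvd (by omega)
    refine ⟨⟨hj, by omega, hd, hd, ?_⟩, trivial⟩
    rw [← add_mul, Nat.add_sub_cancel' hjd.le, Nat.div_mul_cancel hdvd]
  · rintro ⟨a, b, k, l⟩ h
    simp only [mem_filter, mem_solutions] at h
    obtain ⟨⟨-, hb, hk, -, rfl⟩, rfl⟩ := h
    rw [← add_mul, Nat.mul_div_cancel _ hk]
    simp only [Prod.mk.injEq, true_and, and_true]
    omega
  · rintro ⟨d, j⟩ -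
    rfl
  · rintro ⟨a, b, k, l⟩ h
    simp only [mem_filter] at h
    rw [h.2]

end

theorem sum_solutions_shear_sub {G : Type*} [AddCommGroup G] (F : ℕ → ℕ → G) (c : ℕ) :
    ∑ q ∈ (solutions c).filter (fun q => q.2.2.1 < q.2.2.2),
        (F q.2.2.1 q.2.2.2 - F q.2.2.1 (q.2.2.2 - q.2.2.1))
      + ∑ q ∈ (solutions c).filter (fun q => q.2.2.2 < q.2.2.1),
        (F q.2.2.1 q.2.2.2 - F (q.2.2.1 - q.2.2.2) q.2.2.2)
      = ∑ d ∈ c.divisors, ∑ j ∈ Ico 1 d, F j (d - j)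
        - ∑ d ∈ c.divisors, (c / d - 1) • F d d := by
  have hab := sum_filter_lt_add_sum_filter_lt_add_sum_filter_eq (solutions c)
    (·.1) (·.2.1) (fun q => F q.2.2.1 q.2.2.2)
  have hkl := sum_filter_lt_add_sum_filter_lt_add_sum_filter_eq (solutions c)
    (·.2.2.1) (·.2.2.2) (fun q => F q.2.2.1 q.2.2.2)
  rw [sum_solutions_filter_lt_right, sum_solutions_filter_lt_left,
    sum_solutions_filter_eq_left] at hab
  rw [sum_solutions_filter_eq_right] at hkl
  rw [sum_sub_distrib, sum_sub_distrib]
  linear_combination (norm := abel) hkl - hab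

def eisensteinForm (x y : ℕ) : ℚ := x ^ 2 + x * y + y ^ 2

theorem eisensteinForm_sub_shear_right {k l : ℕ} (h : k ≤ l) :
    eisensteinForm k l - eisensteinForm k (l - k) = 2 * k * l := by
  simp only [eisensteinForm]
  push_cast [h]
  ring

theorem eisensteinForm_sub_shear_left {k l : ℕ} (h : l ≤ k) :
    eisensteinForm k l - eisensteinForm (k - l) l = 2 * k * l := by
  simp only [eisensteinForm]
  push_cast [h]
  ring

theorem sum_range_sq_sub_mul_add_sq (d n : ℕ) :
    ∑ j ∈ range n, ((j : ℚ) ^ 2 - d * j + d ^ 2)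
      = (2 * n ^ 3 - 3 * n ^ 2 + n) / 6 - d * (n ^ 2 - n) / 2 + n * d ^ 2 := by
  induction n with
  | zero => simp
  | succ n ih => rw [sum_range_succ, ih]; push_cast; ring

theorem sum_Ico_eisensteinForm {d : ℕ} (hd : 0 < d) :
    ∑ j ∈ Ico 1 d, eisensteinForm j (d - j) = (5 * d ^ 3 - 6 * d ^ 2 + d) / 6 := by
  have hterm : ∀ j ∈ Ico 1 d, eisensteinForm j (d - j) = (j : ℚ) ^ 2 - d * j + d ^ 2 := by
    intro j hj
    simp only [eisensteinForm]
    push_cast [(mem_Ico.1 hj).2.le]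
    ring
  have hrange := sum_range_sq_sub_mul_add_sq d d
  rw [range_eq_Ico, sum_eq_sum_Ico_succ_bot hd] at hrange
  rw [sum_congr rfl hterm]
  push_cast at hrange
  linear_combination hrange

theorem nsmul_eisensteinForm_self {c d : ℕ} (hd : d ∈ c.divisors) :
    (c / d - 1) • eisensteinForm d d = 3 * (c * d - d ^ 2) := by
  have hsub : (c / d - 1) * d = c - d := by
    rw [Nat.sub_mul, one_mul, Nat.div_mul_cancel (Nat.dvd_of_mem_divisors hd)]
  rw [nsmul_eq_mul, eisensteinForm]
  have := congrArg (Nat.cast : ℕ → ℚ) hsub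
  push_cast [Nat.divisor_le hd] at this
  linear_combination 3 * (d : ℚ) * this

theorem cast_sigmaFn (m c : ℕ) : (sigmaFn m c : ℚ) = ∑ d ∈ c.divisors, (d : ℚ) ^ m := by
  push_cast [sigmaFn]
  rfl

theorem stmt_12_general (c : ℕ) :
    ∑ q ∈ ((Finset.Icc 1 c ×ˢ Finset.Icc 1 c ×ˢ Finset.Icc 1 c ×ˢ Finset.Icc 1 c).filter
      (fun q => q.2.2.1 < q.2.2.2 ∧ q.1 * q.2.2.1 + q.2.1 * q.2.2.2 = c)),
        ((q.2.2.1 : ℚ) * (q.2.2.2 : ℚ))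
      = 5 / 24 * (sigmaFn 3 c : ℚ) + 1 / 2 * (sigmaFn 2 c : ℚ)
        + (1 / 24 - 3 * (c : ℚ) / 4) * (sigmaFn 1 c : ℚ) := by
  have hset : (Icc 1 c ×ˢ Icc 1 c ×ˢ Icc 1 c ×ˢ Icc 1 c).filter
      (fun q => q.2.2.1 < q.2.2.2 ∧ q.1 * q.2.2.1 + q.2.1 * q.2.2.2 = c)
      = (solutions c).filter (fun q => q.2.2.1 < q.2.2.2) := by
    rw [solutions, filter_filter]
    exact filter_congr fun q _ => and_comm
  have key := sum_solutions_shear_sub eisensteinForm c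
  rw [sum_congr rfl fun q hq => eisensteinForm_sub_shear_right (mem_filter.1 hq).2.le,
    sum_congr rfl fun q hq => eisensteinForm_sub_shear_left (mem_filter.1 hq).2.le,
    sum_solutions_swap (fun k l => 2 * (k : ℚ) * l) _ fun x y => by ring,
    sum_congr rfl fun d hd => sum_Ico_eisensteinForm (Nat.pos_of_mem_divisors hd),
    sum_congr rfl fun d hd => nsmul_eisensteinForm_self hd] at key
  rw [hset, cast_sigmaFn, cast_sigmaFn, cast_sigmaFn]
  simp only [mul_assoc, ← mul_sum, ← sum_div, sum_add_distrib, sum_sub_distrib, pow_one]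
    at key ⊢
  linear_combination key / 4

/-- `∑_{(a,b,k,ℓ) : k<ℓ, ak+bℓ=c} kℓ = (5/24)σ₃(c) + (1/2)σ₂(c) + (1/24 − 3c/4)σ₁(c)`. -/
theorem stmt_12 (c : ℕ) (hc : 0 < c) :
    ∑ q ∈ ((Finset.Icc 1 c ×ˢ Finset.Icc 1 c ×ˢ Finset.Icc 1 c ×ˢ Finset.Icc 1 c).filter
      (fun q => q.2.2.1 < q.2.2.2 ∧ q.1 * q.2.2.1 + q.2.1 * q.2.2.2 = c)),
        ((q.2.2.1 : ℚ) * (q.2.2.2 : ℚ))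
      = 5 / 24 * (sigmaFn 3 c : ℚ) + 1 / 2 * (sigmaFn 2 c : ℚ)
        + (1 / 24 - 3 * (c : ℚ) / 4) * (sigmaFn 1 c : ℚ) :=
  stmt_12_general c
end

section
/- For every integer n > 1, σ₃(n) > n·φ(n)·σ₁(n), where φ is Euler's totient function and σ_m(n) is the sum of m-th powers of the divisors of n. -/
/-!
By Euler's product formula, `φ(n)/n = ∏_{p ∣ n} (1 - 1/p)` can only decrease when passing from a
divisor `d` of `n` to `n`, so `φ(n)·d ≤ n·φ(d)`. Summing over `d ∣ n` and using `∑_{d ∣ n} φ(d) = n`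
gives `φ(n)·σ₁(n) ≤ n²`, hence `n·φ(n)·σ₁(n) ≤ n³ < 1 + n³ ≤ σ₃(n)`.
-/

open Finset

namespace Nat

theorem prod_one_sub_inv_primeFactors_le_of_dvd {d n : ℕ} (h : d ∣ n) (hn : n ≠ 0) :
    ∏ p ∈ n.primeFactors, (1 - (p : ℚ)⁻¹) ≤ ∏ p ∈ d.primeFactors, (1 - (p : ℚ)⁻¹) := by
  have factor_mem_Icc : ∀ p ∈ n.primeFactors, 0 ≤ 1 - (p : ℚ)⁻¹ ∧ 1 - (p : ℚ)⁻¹ ≤ 1 := by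
    intro p hp
    have : (1 : ℚ) ≤ p := by exact_mod_cast (prime_of_mem_primeFactors hp).one_le
    exact ⟨sub_nonneg.2 (inv_le_one_of_one_le₀ this), sub_le_self _ (by positivity)⟩
  have hsub : d.primeFactors ⊆ n.primeFactors := primeFactors_mono h hn
  rw [← prod_sdiff hsub]
  refine mul_le_of_le_one_left (prod_nonneg fun p hp => (factor_mem_Icc p (hsub hp)).1) ?_
  exact prod_le_one (fun p hp => (factor_mem_Icc p (sdiff_subset hp)).1)
    (fun p hp => (factor_mem_Icc p (sdiff_subset hp)).2)

theorem totient_mul_le_mul_totient_of_dvd {d n : ℕ} (h : d ∣ n) : φ n * d ≤ n * φ d := by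
  rcases eq_or_ne n 0 with rfl | hn
  · simp
  have key := prod_one_sub_inv_primeFactors_le_of_dvd h hn
  have : (φ n * d : ℚ) ≤ n * φ d := by
    rw [totient_eq_mul_prod_factors, totient_eq_mul_prod_factors, mul_right_comm, ← mul_assoc]
    gcongr
  exact_mod_cast this

theorem totient_mul_sum_divisors_le (n : ℕ) : φ n * ∑ d ∈ n.divisors, d ≤ n * n :=
  calc φ n * ∑ d ∈ n.divisors, d
      = ∑ d ∈ n.divisors, φ n * d := mul_sum ..
    _ ≤ ∑ d ∈ n.divisors, n * φ d :=
        sum_le_sum fun _ hd => totient_mul_le_mul_totient_of_dvd (dvd_of_mem_divisors hd)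
    _ = n * n := by rw [← mul_sum, sum_totient]

theorem pow_lt_sum_divisors_pow {n : ℕ} (hn : 1 < n) (k : ℕ) : n ^ k < ∑ d ∈ n.divisors, d ^ k := by
  rw [← cons_self_properDivisors (by omega), sum_cons]
  have : 1 ^ k ≤ ∑ d ∈ n.properDivisors, d ^ k :=
    single_le_sum (f := (· ^ k)) (fun _ _ => Nat.zero_le _) (one_mem_properDivisors_iff_one_lt.2 hn)
  rw [one_pow] at this
  omega

end Nat

/-- For `n > 1`, `σ₃(n) > n·φ(n)·σ₁(n)`. -/
theorem stmt_14 (n : ℕ) (hn : 1 < n) :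
    ∑ d ∈ n.divisors, d ^ 3 > n * n.totient * ∑ d ∈ n.divisors, d :=
  calc n * n.totient * ∑ d ∈ n.divisors, d
      = n * (n.totient * ∑ d ∈ n.divisors, d) := mul_assoc ..
    _ ≤ n * (n * n) := Nat.mul_le_mul_left n (Nat.totient_mul_sum_divisors_le n)
    _ = n ^ 3 := by ring
    _ < ∑ d ∈ n.divisors, d ^ 3 := Nat.pow_lt_sum_divisors_pow hn 3
end

section
/- The four vectors (α, a), (β, b), (k, 0), (ℓ, 0) generate the lattice ℤ² (i.e., their integer linear combinations span ℤ²) if and only if gcd(a, b) = 1 and gcd(k, ℓ, aβ − bα) = 1. -/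
/-! The lattice `L` spanned by the four vectors is all of `ℤ²` iff it contains `(1, 0)` and
`(0, 1)`. Necessity: `gcd(a, b)` divides the second coordinate of every vector of `L`, and
`g = gcd(k, ℓ, aβ − bα)` divides the `2 × 2` minors of the generators, hence `det(v, w)` for all
`v, w ∈ L`, in particular `det((1, 0), (0, 1)) = 1`.
Sufficiency: `a(β, b) − b(α, a) = (aβ − bα, 0)`, so the first coordinates of `L ∩ (ℤ × 0)` form an
ideal containing `k`, `ℓ` and `aβ − bα`, hence `(g, 0) ∈ L`; if `g = 1` and `ua + vb = 1`, then
`u(α, a) + v(β, b)` differs from `(0, 1)` by a multiple of `(1, 0)`. -/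

open Submodule

section Span

variable {R M : Type*} [CommSemiring R] [AddCommMonoid M] [Module R M] {d : R} {s : Set M}

theorem Submodule.dvd_apply_of_mem_span (f : M →ₗ[R] R) (hs : ∀ x ∈ s, d ∣ f x) {x : M}
    (hx : x ∈ span R s) : d ∣ f x := by
  have hle : span R s ≤ Submodule.comap f (Ideal.span {d}) :=
    span_le.mpr fun y hy => Ideal.mem_span_singleton.mpr (hs y hy)
  exact Ideal.mem_span_singleton.mp (hle hx)

theorem Submodule.dvd_apply₂_of_mem_span (B : M →ₗ[R] M →ₗ[R] R)
    (hs : ∀ x ∈ s, ∀ y ∈ s, d ∣ B x y) {x y : M} (hx : x ∈ span R s) (hy : y ∈ span R s) :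
    d ∣ B x y :=
  dvd_apply_of_mem_span (B.flip y) (fun x' hx' => dvd_apply_of_mem_span (B x') (hs x' hx') hy) hx

end Span

theorem Ideal.natCast_gcd_mem {I : Ideal ℤ} {x y : ℤ} (hx : x ∈ I) (hy : y ∈ I) :
    (Int.gcd x y : ℤ) ∈ I := by
  rw [Int.gcd_eq_gcd_ab]
  exact I.add_mem (I.mul_mem_right _ hx) (I.mul_mem_right _ hy)

theorem Submodule.zero_one_mem_of_isCoprime {R : Type*} [CommRing R] {p : Submodule R (R × R)}
    {a b α β : R} (hab : IsCoprime a b) (hαa : (α, a) ∈ p) (hβb : (β, b) ∈ p)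
    (h₁ : ((1, 0) : R × R) ∈ p) : ((0, 1) : R × R) ∈ p := by
  obtain ⟨u, v, huv⟩ := hab
  have h :=
    sub_mem (add_mem (p.smul_mem u hαa) (p.smul_mem v hβb)) (p.smul_mem (u * α + v * β) h₁)
  convert h using 1
  ext <;> simp [huv]

theorem Submodule.eq_top_of_one_zero_mem_of_zero_one_mem {R : Type*} [Semiring R]
    {p : Submodule R (R × R)}
    (h₁ : ((1, 0) : R × R) ∈ p) (h₂ : ((0, 1) : R × R) ∈ p) : p = ⊤ := by
  refine eq_top_iff'.mpr fun x => ?_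
  have hx : x = x.1 • ((1, 0) : R × R) + x.2 • ((0, 1) : R × R) := by ext <;> simp
  rw [hx]
  exact p.add_mem (p.smul_mem _ h₁) (p.smul_mem _ h₂)

def det₂ (R : Type*) [CommRing R] : R × R →ₗ[R] R × R →ₗ[R] R :=
  LinearMap.mk₂ R (fun v w => v.1 * w.2 - v.2 * w.1)
    (fun _ _ _ => by simp only [Prod.fst_add, Prod.snd_add]; ring)
    (fun _ _ _ => by simp only [Prod.smul_fst, Prod.smul_snd, smul_eq_mul]; ring)
    (fun _ _ _ => by simp only [Prod.fst_add, Prod.snd_add]; ring)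
    (fun _ _ _ => by simp only [Prod.smul_fst, Prod.smul_snd, smul_eq_mul]; ring)

@[simp]
theorem det₂_apply {R : Type*} [CommRing R] (v w : R × R) :
    det₂ R v w = v.1 * w.2 - v.2 * w.1 :=
  rfl

section Generators

variable {a b k l α β : ℤ}

theorem gcd_eq_one_of_mem_span
    (h : ((0, 1) : ℤ × ℤ) ∈ span ℤ {(α, a), (β, b), (k, 0), (l, 0)}) : Int.gcd a b = 1 := by
  have hdvd : (Int.gcd a b : ℤ) ∣ 1 := by
    refine dvd_apply_of_mem_span (LinearMap.snd ℤ ℤ ℤ) ?_ h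
    simp [Int.gcd_dvd_left, Int.gcd_dvd_right]
  exact Nat.dvd_one.mp (Int.natCast_dvd.mp hdvd)

theorem gcd_dvd_det₂_of_mem_span {v w : ℤ × ℤ}
    (hv : v ∈ span ℤ {(α, a), (β, b), (k, 0), (l, 0)})
    (hw : w ∈ span ℤ {(α, a), (β, b), (k, 0), (l, 0)}) :
    (Int.gcd k (Int.gcd l (a * β - b * α)) : ℤ) ∣ det₂ ℤ v w := by
  set g := Int.gcd k (Int.gcd l (a * β - b * α))
  have hgk : (g : ℤ) ∣ k := Int.gcd_dvd_left _ _
  have hgl : (g : ℤ) ∣ l := (Int.gcd_dvd_right _ _).trans (Int.gcd_dvd_left _ _)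
  have hgD : (g : ℤ) ∣ a * β - b * α := (Int.gcd_dvd_right _ _).trans (Int.gcd_dvd_right _ _)
  refine dvd_apply₂_of_mem_span (det₂ ℤ) ?_ hv hw
  rintro v (rfl | rfl | rfl | rfl) w (rfl | rfl | rfl | rfl) <;>
    simp only [det₂_apply, mul_zero, zero_mul, zero_sub, sub_zero, sub_self, dvd_zero, dvd_neg]
  all_goals first
    | exact hgk.mul_left _ | exact hgk.mul_right _ | exact hgl.mul_left _ | exact hgl.mul_right _
    | exact (dvd_zero _).trans (dvd_of_eq (by ring1)) | exact hgD.trans (dvd_of_eq (by ring1))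
    | exact (dvd_neg.mpr hgD).trans (dvd_of_eq (by ring1))

theorem det_mk_zero_mem_span :
    ((a * β - b * α, 0) : ℤ × ℤ) ∈ span ℤ {(α, a), (β, b), (k, 0), (l, 0)} := by
  have hv : a • ((β, b) : ℤ × ℤ) - b • (α, a) = (a * β - b * α, 0) := by
    ext <;> simp only [Prod.fst_sub, Prod.snd_sub, Prod.smul_fst, Prod.smul_snd, smul_eq_mul]; ring
  rw [← hv]
  exact sub_mem (smul_mem _ a (subset_span (by simp))) (smul_mem _ b (subset_span (by simp)))

theorem natCast_gcd_mk_zero_mem_span :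
    ((Int.gcd k (Int.gcd l (a * β - b * α)) : ℤ), 0) ∈ span ℤ {(α, a), (β, b), (k, 0), (l, 0)} := by
  let I : Ideal ℤ := (span ℤ {(α, a), (β, b), (k, 0), (l, 0)}).comap (LinearMap.inl ℤ ℤ ℤ)
  have hk : k ∈ I := subset_span (by simp)
  have hl : l ∈ I := subset_span (by simp)
  have hD : a * β - b * α ∈ I := det_mk_zero_mem_span
  exact Ideal.natCast_gcd_mem hk (Ideal.natCast_gcd_mem hl hD)

end Generators

theorem stmt_15_general (a b k l α β : ℤ) :
    Submodule.span ℤ ({(α, a), (β, b), (k, 0), (l, 0)} : Set (ℤ × ℤ)) = ⊤ ↔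
      Int.gcd a b = 1 ∧ Int.gcd k (Int.gcd l (a * β - b * α)) = 1 := by
  constructor
  · intro h
    have hmem : ∀ v, v ∈ span ℤ ({(α, a), (β, b), (k, 0), (l, 0)} : Set (ℤ × ℤ)) :=
      fun v => h ▸ mem_top
    refine ⟨gcd_eq_one_of_mem_span (hmem _), ?_⟩
    have hdvd := gcd_dvd_det₂_of_mem_span (hmem (1, 0)) (hmem (0, 1))
    exact Nat.dvd_one.mp (Int.natCast_dvd.mp (by simpa using hdvd))
  · rintro ⟨hab, hg⟩
    have h₁ : ((1, 0) : ℤ × ℤ) ∈ span ℤ {(α, a), (β, b), (k, 0), (l, 0)} := by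
      convert natCast_gcd_mk_zero_mem_span using 2
      exact_mod_cast hg.symm
    have h₂ := zero_one_mem_of_isCoprime (Int.isCoprime_iff_gcd_eq_one.mpr hab)
      (subset_span (Set.mem_insert _ _))
      (subset_span (Set.mem_insert_of_mem _ (Set.mem_insert _ _))) h₁
    exact eq_top_of_one_zero_mem_of_zero_one_mem h₁ h₂

/-- The vectors `(α,a)`, `(β,b)`, `(k,0)`, `(ℓ,0)` generate the lattice `ℤ²` iff
`gcd(a,b) = 1` and `gcd(k, ℓ, aβ − bα) = 1`. -/
theorem stmt_15 (a b k l α β : ℤ) (ha : 0 < a) (hb : 0 < b) (hk : 0 < k) (hl : 0 < l) :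
    Submodule.span ℤ ({(α, a), (β, b), (k, 0), (l, 0)} : Set (ℤ × ℤ)) = ⊤ ↔
      Int.gcd a b = 1 ∧ Int.gcd k (Int.gcd l (a * β - b * α)) = 1 :=
  stmt_15_general a b k l α β
end

section
/- Let a, b, k, ℓ be positive integers with gcd(a, b) = 1. The number of pairs (α, β) of integers with 0 ≤ α < k, 0 ≤ β < ℓ, and gcd(k, ℓ, aβ − bα) = 1 equals k·ℓ·φ(gcd(k, ℓ))/gcd(k, ℓ). -/
/-!
Let `d = gcd(k, ℓ)`. The condition only depends on `aβ - bα` modulo `d`, where it says that this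
residue is a unit of `ZMod d`. Reducing `(α, β)` modulo `d` is `(k/d)(ℓ/d)`-to-one from the box onto
`(ZMod d)²`, and since `a, b` are coprime the form `(x, y) ↦ a y - b x` is `d`-to-one from
`(ZMod d)²` onto `ZMod d`. Hence the count is `(k/d)(ℓ/d) · d · φ(d)`.
-/

open Finset

lemma card_filter_comp_eq_mul {ι κ : Type*} [Fintype κ] [DecidableEq κ] (s : Finset ι)
    (g : ι → κ) (P : κ → Prop) [DecidablePred P] {n : ℕ}
    (hg : ∀ y, #{x ∈ s | g x = y} = n) :
    #{x ∈ s | P (g x)} = #{y | P y} * n := by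
  calc #{x ∈ s | P (g x)} = #{x ∈ s | g x ∈ ({y | P y} : Finset κ)} := by simp
    _ = ∑ y ∈ {y | P y}, #{x ∈ s | g x = y} := (sum_card_fiberwise_eq_card_filter _ _ _).symm
    _ = #{y | P y} * n := sum_const_nat fun y _ => hg y

lemma card_filter_prodMap_eq {ι ι' κ κ' : Type*} [DecidableEq κ] [DecidableEq κ']
    (s : Finset ι) (t : Finset ι') (f : ι → κ) (g : ι' → κ') (q : κ × κ') :
    #{p ∈ s ×ˢ t | (f p.1, g p.2) = q} = #{x ∈ s | f x = q.1} * #{y ∈ t | g y = q.2} := by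
  simp only [Prod.ext_iff]
  rw [filter_product (fun x => f x = q.1) (fun y => g y = q.2), card_product]

lemma card_filter_isUnit (M : Type*) [Monoid M] [Fintype M] [Fintype Mˣ]
    [DecidablePred (IsUnit : M → Prop)] :
    #{x : M | IsUnit x} = Fintype.card Mˣ := by
  rw [← card_univ, ← card_map ⟨Units.val, Units.val_injective⟩]
  congr 1
  ext x
  simp only [mem_filter, mem_univ, true_and, mem_map, Function.Embedding.coeFn_mk]
  rfl

lemma card_filter_Ico_intCast_eq {d m : ℕ} [NeZero d] (hdm : d ∣ m) (x : ZMod d) :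
    #{α ∈ Ico (0 : ℤ) m | ((α : ℤ) : ZMod d) = x} = m / d := by
  obtain ⟨q, rfl⟩ := hdm
  have hd : (0 : ℤ) < d := by exact_mod_cast NeZero.pos d
  have hcard := Int.Ico_filter_modEq_card 0 (d * q : ℕ) hd (x.val : ℤ)
  simp_rw [← ZMod.intCast_eq_intCast_iff, Int.cast_natCast, ZMod.natCast_zmod_val] at hcard
  push_cast at hcard
  have hshift : ((d : ℚ) * q - x.val) / d = (0 - x.val) / d + q := by
    have : (d : ℚ) ≠ 0 := by exact_mod_cast NeZero.ne d
    field_simp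
    ring
  rw [hshift, Int.ceil_add_natCast, add_sub_cancel_left, max_eq_left (Nat.cast_nonneg q)] at hcard
  rw [Nat.mul_div_cancel_left _ (NeZero.pos d)]
  exact_mod_cast hcard

lemma card_filter_mul_sub_mul_eq {R : Type*} [CommRing R] [Fintype R] [DecidableEq R] {A B : R}
    (hAB : IsCoprime A B) (r : R) :
    #{p : R × R | A * p.2 - B * p.1 = r} = Fintype.card R := by
  obtain ⟨u, v, huv⟩ := hAB
  rw [← card_univ]
  refine card_nbij' (fun p => u * p.1 + v * p.2) (fun t => (-v * r + A * t, u * r + B * t))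
    (fun _ _ => mem_coe.2 (mem_univ _)) (fun t _ => ?_) (fun p hp => ?_) (fun t _ => ?_)
  · simp only [coe_filter, mem_univ, true_and, Set.mem_ofPred_eq]
    linear_combination r * huv
  · simp only [coe_filter, mem_univ, true_and, Set.mem_ofPred_eq] at hp
    ext
    · linear_combination v * hp + p.1 * huv
    · linear_combination (-u) * hp + p.2 * huv
  · linear_combination t * huv

lemma gcd_gcd_eq_one_iff_isUnit (k l : ℕ) (X : ℤ) :
    Int.gcd k (Int.gcd l X) = 1 ↔ IsUnit (X : ZMod (Nat.gcd k l)) := by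
  rw [ZMod.coe_int_isUnit_iff_isCoprime, Int.isCoprime_iff_gcd_eq_one]
  simp [Int.gcd, Nat.gcd_assoc]

theorem stmt_16_general (a b k l : ℕ) (hk : 0 < k) (hab : Nat.gcd a b = 1) :
    (((Finset.Ico (0 : ℤ) (k : ℤ) ×ˢ Finset.Ico (0 : ℤ) (l : ℤ)).filter
      (fun p => Int.gcd (k : ℤ) (Int.gcd (l : ℤ) ((a : ℤ) * p.2 - (b : ℤ) * p.1)) = 1)).card : ℚ)
      = (k : ℚ) * (l : ℚ) * ((Nat.gcd k l).totient : ℚ) / (Nat.gcd k l : ℚ) := by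
  set d := Nat.gcd k l
  have : NeZero d := ⟨(Nat.gcd_pos_of_pos_left l hk).ne'⟩
  have hdk : d ∣ k := Nat.gcd_dvd_left k l
  have hdl : d ∣ l := Nat.gcd_dvd_right k l
  have hcop : IsCoprime (a : ZMod d) (b : ZMod d) := by
    simpa using (Nat.isCoprime_iff_coprime.2 hab).map (Int.castRingHom (ZMod d))
  set L : ZMod d × ZMod d → ZMod d := fun q => a * q.2 - b * q.1
  have hpairs := card_filter_comp_eq_mul (Ico (0 : ℤ) k ×ˢ Ico (0 : ℤ) l)
    (fun p => ((p.1 : ZMod d), (p.2 : ZMod d))) (fun q => IsUnit (L q)) fun q => by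
      rw [card_filter_prodMap_eq, card_filter_Ico_intCast_eq hdk,
        card_filter_Ico_intCast_eq hdl]
  have hresidues := card_filter_comp_eq_mul univ L IsUnit (card_filter_mul_sub_mul_eq hcop)
  rw [card_filter_isUnit, ZMod.card_units_eq_totient, ZMod.card] at hresidues
  have hcount : #{p ∈ Ico (0 : ℤ) k ×ˢ Ico (0 : ℤ) l |
      Int.gcd k (Int.gcd l (a * p.2 - b * p.1)) = 1} = d.totient * d * (k / d * (l / d)) := by
    rw [← hresidues, ← hpairs]
    congr! 2 with p
    rw [gcd_gcd_eq_one_iff_isUnit]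
    push_cast
    rfl
  have hd : (d : ℚ) ≠ 0 := by exact_mod_cast NeZero.ne d
  rw [hcount, Nat.cast_mul, Nat.cast_mul, Nat.cast_mul, Nat.cast_div hdk hd,
    Nat.cast_div hdl hd]
  field_simp

/-- For positive integers `a,b,k,ℓ` with `gcd(a,b)=1`, the number of pairs `(α,β)` with
`0 ≤ α < k`, `0 ≤ β < ℓ` and `gcd(k, ℓ, aβ − bα) = 1` is `kℓ·φ(gcd(k,ℓ))/gcd(k,ℓ)`. -/
theorem stmt_16 (a b k l : ℕ) (ha : 0 < a) (hb : 0 < b) (hk : 0 < k) (hl : 0 < l)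
    (hab : Nat.gcd a b = 1) :
    (((Finset.Ico (0 : ℤ) (k : ℤ) ×ˢ Finset.Ico (0 : ℤ) (l : ℤ)).filter
      (fun p => Int.gcd (k : ℤ) (Int.gcd (l : ℤ) ((a : ℤ) * p.2 - (b : ℤ) * p.1)) = 1)).card : ℚ)
      = (k : ℚ) * (l : ℚ) * ((Nat.gcd k l).totient : ℚ) / (Nat.gcd k l : ℚ) :=
  stmt_16_general a b k l hk hab
end

section
/- The number of pairs of permutations (s, t) in S_n × S_n such that the commutator [s,t] = s t s⁻¹ t⁻¹ is a 3-cycle and s is an n-cycle equals C(n,3)·n!. -/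
/-!
Writing `u = t s t⁻¹`, the commutator `⁅s, t⁆` equals `s u⁻¹`, and `t ↦ t s t⁻¹` maps `Sₙ` onto
the conjugacy class of `s` with all fibres of size `|C(s)|`. Since this class consists of the
`n`-cycles, `#(n-cycles) · |C(s)| = n!`, and everything is invariant under conjugating `s`, it
suffices to show that for the rotation `s = (0 1 … n-1)` exactly `C(n, 3)` of the `n`-cycles `u`
make `s u⁻¹` a 3-cycle. Put differently: for `a < b < c`, exactly one of the two 3-cycles `σ` on
`{a, b, c}` makes `σ s` an `n`-cycle. The product `(a b c) s`, with `(a b c) = swap a b * swap b c`,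
sends `b - 1 ↦ c`, `c - 1 ↦ a`, `a - 1 ↦ b` and `x ↦ x + 1` elsewhere, so it links the arcs
`[a, b)`, `[b, c)`, `[c, n) ∪ [0, a)` into one cycle; `(a c b) s` maps the arc `[a, b)` into itself.
-/

open Equiv Equiv.Perm Finset
open scoped commutatorElement

section ConjugationCounting

variable {G : Type*} [Group G] [Fintype G]

theorem card_filter_commutatorElement_eq_of_isConj {P : G → Prop} [DecidablePred P]
    (hP : ∀ g x, P (g * x * g⁻¹) ↔ P x) {s s' : G} (h : IsConj s s') :
    #{t | P ⁅s, t⁆} = #{t | P ⁅s', t⁆} := by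
  obtain ⟨g, rfl⟩ := isConj_iff.mp h
  refine card_nbij' (fun t => g * t * g⁻¹) (fun t => g⁻¹ * t * g) (fun t ht => ?_)
    (fun t ht => ?_) (fun t _ => by group) (fun t _ => by group)
  · simp only [coe_filter, mem_univ, true_and, Set.mem_ofPred] at ht ⊢
    have : ⁅g * s * g⁻¹, g * t * g⁻¹⁆ = g * ⁅s, t⁆ * g⁻¹ := by
      simp only [commutatorElement_def]; group
    rwa [this, hP]
  · simp only [coe_filter, mem_univ, true_and, Set.mem_ofPred] at ht ⊢
    have : ⁅s, g⁻¹ * t * g⁆ = g⁻¹ * ⁅g * s * g⁻¹, t⁆ * g⁻¹⁻¹ := by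
      simp only [commutatorElement_def]; group
    rwa [this, hP]

variable [DecidableEq G]

theorem card_filter_conj_eq_of_isConj {s u : G} (h : IsConj s u) :
    #{t | t * s * t⁻¹ = u} = #{t | t * s * t⁻¹ = s} := by
  obtain ⟨g, rfl⟩ := isConj_iff.mp h
  refine card_nbij' (g⁻¹ * ·) (g * ·) (fun t ht => ?_) (fun t ht => ?_)
    (fun t _ => by simp) (fun t _ => by simp)
  · simp only [coe_filter, mem_univ, true_and, Set.mem_ofPred] at ht ⊢
    calc g⁻¹ * t * s * (g⁻¹ * t)⁻¹ = g⁻¹ * (t * s * t⁻¹) * g := by group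
      _ = s := by rw [ht]; group
  · simp only [coe_filter, mem_univ, true_and, Set.mem_ofPred] at ht ⊢
    calc g * t * s * (g * t)⁻¹ = g * (t * s * t⁻¹) * g⁻¹ := by group
      _ = g * s * g⁻¹ := by rw [ht]

theorem card_filter_conj_mem_eq_card_mul (s : G) (U : Finset G) (hU : ∀ u ∈ U, IsConj s u) :
    #{t | t * s * t⁻¹ ∈ U} = #U * #{t | t * s * t⁻¹ = s} := by
  rw [card_eq_sum_card_fiberwise (f := fun t => t * s * t⁻¹) (fun t ht => by simpa using ht),
    sum_congr rfl fun u hu => ?_, sum_const, smul_eq_mul]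
  rw [filter_filter, ← card_filter_conj_eq_of_isConj (hU u hu)]
  congr 1
  ext t
  simp only [mem_filter, mem_univ, true_and, and_iff_right_iff_imp]
  rintro rfl
  exact hu

end ConjugationCounting

theorem Nat.card_subtype_prod_eq_sum {α β : Type*} [Fintype α] [Fintype β] (P : α → β → Prop)
    (Q : α → Prop) [DecidablePred Q] [∀ a, DecidablePred (P a)] :
    Nat.card {p : α × β // P p.1 p.2 ∧ Q p.1} = ∑ a ∈ univ.filter Q, #{b | P a b} := by
  rw [Nat.card_congr (subtypeProdEquivSigmaSubtype fun a b => P a b ∧ Q a), Nat.card_sigma,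
    sum_filter]
  refine sum_congr rfl fun a _ => ?_
  split_ifs with h <;> simp [h, Nat.card_eq_fintype_card, Fintype.card_subtype]

theorem Finset.exists_lt_lt_of_card_eq_three {α : Type*} [LinearOrder α] {s : Finset α}
    (h : #s = 3) : ∃ a b c, a < b ∧ b < c ∧ s = {a, b, c} := by
  set f := s.orderEmbOfFin h
  refine ⟨f 0, f 1, f 2, f.strictMono (by decide), f.strictMono (by decide), ?_⟩
  rw [← coe_inj, ← range_orderEmbOfFin s h]
  ext x
  simp only [Set.mem_range, Fin.exists_fin_succ, Fin.exists_fin_zero, coe_insert, coe_singleton,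
    Set.mem_insert_iff, Set.mem_singleton_iff]
  grind

theorem Equiv.Perm.SameCycle.mem_of_mapsTo {α : Type*} [Finite α] {f : Perm α} {s : Set α}
    {x y : α} (hs : Set.MapsTo f s s) (h : f.SameCycle x y) (hx : x ∈ s) : y ∈ s := by
  obtain ⟨k, -, rfl⟩ := h.exists_nat_pow_eq
  exact hs.perm_pow k hx

theorem Equiv.Perm.isCycle_and_support_eq_univ_of_forall_sameCycle {α : Type*} [Fintype α]
    [DecidableEq α] {f : Perm α} {x y : α} (hxy : x ≠ y) (h : ∀ z, f.SameCycle x z) :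
    f.IsCycle ∧ f.support = univ := by
  have hsupp : f.support = univ := eq_univ_of_forall fun z => mem_support.2 fun hz =>
    hxy ((h y).eq_of_left (((h z).apply_eq_self_iff).2 hz))
  exact ⟨⟨x, mem_support.1 (hsupp ▸ mem_univ x), fun z _ => h z⟩, hsupp⟩

section SwapMulSwap

variable {α : Type*} [DecidableEq α] {a b c x : α}

theorem Equiv.swap_mul_swap_apply_left (hab : a ≠ b) (hac : a ≠ c) :
    (swap a b * swap b c) a = b := by
  rw [Perm.mul_apply, swap_apply_of_ne_of_ne hab hac, swap_apply_left]

theorem Equiv.swap_mul_swap_apply_middle (hac : a ≠ c) (hbc : b ≠ c) :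
    (swap a b * swap b c) b = c := by
  rw [Perm.mul_apply, swap_apply_left, swap_apply_of_ne_of_ne hac.symm hbc.symm]

theorem Equiv.swap_mul_swap_apply_right : (swap a b * swap b c) c = a := by
  rw [Perm.mul_apply, swap_apply_right, swap_apply_right]

theorem Equiv.swap_mul_swap_apply_of_ne (ha : x ≠ a) (hb : x ≠ b) (hc : x ≠ c) :
    (swap a b * swap b c) x = x := by
  rw [Perm.mul_apply, swap_apply_of_ne_of_ne hb hc, swap_apply_of_ne_of_ne ha hb]

variable [Fintype α]

theorem Equiv.Perm.isThreeCycle_swap_mul_swap (h : [a, b, c].Nodup) :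
    (swap a b * swap b c).IsThreeCycle := by
  rw [← card_support_eq_three_iff, support_swap_mul_swap h]
  simpa using List.toFinset_card_of_nodup h

theorem Equiv.Perm.IsThreeCycle.eq_swap_mul_swap_or {γ : Perm α} (h : γ.IsThreeCycle)
    (hs : γ.support = {a, b, c}) : γ = swap a b * swap b c ∨ γ = swap a c * swap c b := by
  have ha : a ∈ γ.support := by simp [hs]
  have hnodup := h.nodup_iff_mem_support.mpr ha
  have h1 : γ a ∈ γ.support := apply_mem_support.mpr ha
  have h2 : γ (γ a) ∈ γ.support := apply_mem_support.mpr h1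
  simp only [hs, mem_insert, mem_singleton] at h1 h2
  simp only [List.nodup_cons, List.mem_cons, List.not_mem_nil] at hnodup
  rw [h.eq_swap_mul_swap_iff_mem_support.mpr ha]
  grind

end SwapMulSwap

namespace Fin

variable {n : ℕ}

theorem sameCycle_of_forall_apply_eq_add_one [NeZero n] {p : Perm (Fin n)} {x y : Fin n}
    (hxy : x ≤ y) (h : ∀ z, x ≤ z → z < y → p z = z + 1) : p.SameCycle x y := by
  obtain ⟨k, hk⟩ : ∃ k, y.val = x.val + k := ⟨y - x, by omega⟩
  induction k generalizing y with
  | zero => rw [Fin.ext (by omega : y.val = x.val)]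
  | succ k ih =>
    set z : Fin n := ⟨x + k, by omega⟩
    have hz : z.val = x.val + k := rfl
    have hxz : x ≤ z := by fin_omega
    have hzy : z < y := by fin_omega
    have hz1 : z + 1 = y := Fin.ext (by rw [val_add_one_of_lt' (by omega)]; omega)
    rw [← hz1, ← h z hxz hzy, sameCycle_apply_right]
    exact ih hxz (fun w hxw hwz => h w hxw (hwz.trans hzy)) rfl

theorem mul_finRotate_apply_of_val_add_one_eq (σ : Perm (Fin n)) {z w : Fin n}
    (h : z.val + 1 = w.val) : (σ * finRotate n) z = σ w := by
  have := z.neZero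
  have hw : z + 1 = w := Fin.ext (by rw [val_add_one_of_lt' (by omega), h])
  rw [Perm.mul_apply, finRotate_apply, hw]

theorem sameCycle_mul_finRotate_of_forall_apply_eq {σ : Perm (Fin n)} {x y : Fin n} (hxy : x ≤ y)
    (h : ∀ z, x < z → z ≤ y → σ z = z) : (σ * finRotate n).SameCycle x y := by
  have := x.neZero
  refine sameCycle_of_forall_apply_eq_add_one hxy fun z hxz hzy => ?_
  have hz := val_add_one_of_lt' (by fin_omega : z.val + 1 < n)
  rw [mul_finRotate_apply_of_val_add_one_eq σ hz.symm, h] <;>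
    simp only [Fin.lt_def, Fin.le_def, hz] at hxz hzy ⊢ <;> omega

theorem isCycle_and_card_support_swap_mul_swap_mul_finRotate {a b c : Fin n} (hab : a < b)
    (hbc : b < c) : (swap a b * swap b c * finRotate n).IsCycle ∧
      #(swap a b * swap b c * finRotate n).support = n := by
  have := a.neZero
  have hab' : a.val < b.val := hab
  have hbc' : b.val < c.val := hbc
  have hac : a ≠ c := (hab.trans hbc).ne
  set p := swap a b * swap b c * finRotate n
  have jump : ∀ z w : Fin n, z.val + 1 = w.val → p.SameCycle z ((swap a b * swap b c) w) :=
    fun z w h => mul_finRotate_apply_of_val_add_one_eq _ h ▸ SameCycle.rfl.apply_right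
  have arc : ∀ x y : Fin n, x ≤ y → (∀ z : Fin n, x < z → z ≤ y → z ≠ a ∧ z ≠ b ∧ z ≠ c) →
      p.SameCycle x y := fun x y hxy h => sameCycle_mul_finRotate_of_forall_apply_eq hxy
    fun z hxz hzy => swap_mul_swap_apply_of_ne (h z hxz hzy).1 (h z hxz hzy).2.1 (h z hxz hzy).2.2
  have hac_c : p.SameCycle a c := by
    set b' : Fin n := ⟨b - 1, by omega⟩
    have hb' : b'.val = b.val - 1 := rfl
    rw [← swap_mul_swap_apply_middle hac hbc.ne]
    exact (arc a b' (by fin_omega) fun z _ _ => by fin_omega).trans (jump b' b (by omega))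
  have hba : p.SameCycle b a := by
    set c' : Fin n := ⟨c - 1, by omega⟩
    have hc' : c'.val = c.val - 1 := rfl
    rw [← swap_mul_swap_apply_right (a := a) (b := b) (c := c)]
    exact (arc b c' (by fin_omega) fun z _ _ => by fin_omega).trans (jump c' c (by omega))
  have hall : ∀ y, p.SameCycle a y := fun y => by
    rcases lt_or_ge y a with hya | hay
    · set a' : Fin n := ⟨a - 1, by omega⟩
      have ha' : a'.val = a.val - 1 := rfl
      have hjump := jump a' a (by fin_omega)
      rw [swap_mul_swap_apply_left hab.ne hac] at hjump
      exact ((arc y a' (by fin_omega) fun z _ _ => by fin_omega).trans (hjump.trans hba)).symm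
    rcases lt_or_ge y b with hyb | hby
    · exact arc a y hay fun z _ _ => by fin_omega
    rcases lt_or_ge y c with hyc | hcy
    · exact hba.symm.trans (arc b y hby fun z _ _ => by fin_omega)
    · exact hac_c.trans (arc c y hcy fun z _ _ => by fin_omega)
  obtain ⟨hcyc, hsupp⟩ := isCycle_and_support_eq_univ_of_forall_sameCycle hab.ne hall
  exact ⟨hcyc, by rw [hsupp, card_univ, Fintype.card_fin]⟩

theorem not_isCycle_and_card_support_swap_mul_swap_mul_finRotate {a b c : Fin n} (hab : a < b)
    (hbc : b < c) : ¬ ((swap a c * swap c b * finRotate n).IsCycle ∧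
      #(swap a c * swap c b * finRotate n).support = n) := by
  rintro ⟨hcyc, hcard⟩
  have := a.neZero
  have hinv : Set.MapsTo (swap a c * swap c b * finRotate n) (Set.Ico a b) (Set.Ico a b) := by
    rintro z ⟨haz, hzb⟩
    have haz' : a.val ≤ z.val := haz
    have hzb' : z.val < b.val := hzb
    have hz := val_add_one_of_lt' (by fin_omega : z.val + 1 < n)
    rcases eq_or_ne (z.val + 1) b with hzb | hzb
    · rw [mul_finRotate_apply_of_val_add_one_eq _ hzb, swap_mul_swap_apply_right]
      exact ⟨le_rfl, hab⟩
    · rw [mul_finRotate_apply_of_val_add_one_eq _ hz.symm, swap_mul_swap_apply_of_ne]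
      · simp only [Set.mem_Ico, Fin.le_def, Fin.lt_def, hz]
        omega
      all_goals exact Fin.ne_of_val_ne (by rw [hz]; fin_omega)
  have hsupp : (swap a c * swap c b * finRotate n).support = univ :=
    eq_univ_of_card _ (by rw [hcard, Fintype.card_fin])
  have hmem : ∀ x, x ∈ (swap a c * swap c b * finRotate n).support := fun x => hsupp ▸ mem_univ x
  have hc := (hcyc.sameCycle (mem_support.1 (hmem a)) (mem_support.1 (hmem c))).mem_of_mapsTo hinv
    ⟨le_rfl, hab⟩
  exact absurd hc.2 (not_lt.2 hbc.le)

theorem eq_swap_mul_swap_mul_finRotate_of_support_eq {u : Perm (Fin n)}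
    (hu : u.IsCycle ∧ #u.support = n) (h3 : (finRotate n * u⁻¹).IsThreeCycle) {a b c : Fin n}
    (hab : a < b) (hbc : b < c) (hS : (finRotate n * u⁻¹).support = {a, b, c}) :
    u = swap a b * swap b c * finRotate n := by
  have hinv : (finRotate n * u⁻¹)⁻¹ = u * (finRotate n)⁻¹ := by group
  rw [← IsThreeCycle.inv_iff, hinv] at h3
  rw [← support_inv, hinv] at hS
  have hu' : u = u * (finRotate n)⁻¹ * finRotate n := by group
  rcases h3.eq_swap_mul_swap_or hS with h | h
  · rw [hu', h]
  · rw [hu', h] at hu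
    exact absurd hu (not_isCycle_and_card_support_swap_mul_swap_mul_finRotate hab hbc)

open scoped Classical in
theorem card_filter_isCycle_isThreeCycle_finRotate_mul_inv :
    #{u : Perm (Fin n) | (u.IsCycle ∧ #u.support = n) ∧ (finRotate n * u⁻¹).IsThreeCycle} =
      n.choose 3 := by
  have hcard : #(powersetCard 3 (univ : Finset (Fin n))) = n.choose 3 := by
    rw [card_powersetCard, card_univ, Fintype.card_fin]
  rw [← hcard]
  refine card_bij (fun u _ => (finRotate n * u⁻¹).support) (fun u hu => ?_)
    (fun u₁ h₁ u₂ h₂ heq => ?_) (fun S hS => ?_)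
  · exact mem_powersetCard_univ.2 (mem_filter.1 hu).2.2.card_support
  · simp only [mem_filter, mem_univ, true_and] at h₁ h₂
    obtain ⟨a, b, c, hab, hbc, hS⟩ := exists_lt_lt_of_card_eq_three h₁.2.card_support
    rw [eq_swap_mul_swap_mul_finRotate_of_support_eq h₁.1 h₁.2 hab hbc hS,
      eq_swap_mul_swap_mul_finRotate_of_support_eq h₂.1 h₂.2 hab hbc (heq ▸ hS)]
  · obtain ⟨a, b, c, hab, hbc, rfl⟩ := exists_lt_lt_of_card_eq_three (mem_powersetCard_univ.1 hS)
    have hnodup : [a, b, c].Nodup := by simp [hab.ne, hbc.ne, (hab.trans hbc).ne]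
    have hinv : finRotate n * (swap a b * swap b c * finRotate n)⁻¹ = (swap a b * swap b c)⁻¹ := by
      group
    refine ⟨swap a b * swap b c * finRotate n, mem_filter.2 ⟨mem_univ _,
      isCycle_and_card_support_swap_mul_swap_mul_finRotate hab hbc, ?_⟩, ?_⟩
    · rw [hinv, IsThreeCycle.inv_iff]
      exact isThreeCycle_swap_mul_swap hnodup
    · rw [hinv, support_inv, support_swap_mul_swap hnodup]

theorem isConj_finRotate_iff (hn : 2 ≤ n) {s : Perm (Fin n)} :
    IsConj (finRotate n) s ↔ s.IsCycle ∧ #s.support = n := by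
  have hρ : #(finRotate n).support = n := by
    rw [support_finRotate_of_le hn, card_univ, Fintype.card_fin]
  refine ⟨fun h => ?_, fun hs => (isCycle_finRotate_of_le hn).isConj hs.1 (hρ.trans hs.2.symm)⟩
  obtain ⟨g, rfl⟩ := isConj_iff.mp h
  exact ⟨(isCycle_finRotate_of_le hn).conj, by rw [card_support_conj, hρ]⟩

open scoped Classical in
theorem card_isCycle_mul_card_centralizer_finRotate (hn : 2 ≤ n) :
    #{s : Perm (Fin n) | s.IsCycle ∧ #s.support = n} *
      #{t | t * finRotate n * t⁻¹ = finRotate n} = n.factorial := by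
  rw [← card_filter_conj_mem_eq_card_mul _ _ fun s hs =>
      (isConj_finRotate_iff hn).2 (mem_filter.1 hs).2,
    filter_true_of_mem fun t _ => by
      simpa using (isConj_finRotate_iff hn).1 (isConj_iff.2 ⟨t, rfl⟩),
    card_univ, Fintype.card_perm, Fintype.card_fin]

open scoped Classical in
theorem card_filter_isThreeCycle_commutatorElement_finRotate (hn : 2 ≤ n) :
    #{t : Perm (Fin n) | ⁅finRotate n, t⁆.IsThreeCycle} =
      n.choose 3 * #{t | t * finRotate n * t⁻¹ = finRotate n} := by
  rw [← card_filter_isCycle_isThreeCycle_finRotate_mul_inv,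
    ← card_filter_conj_mem_eq_card_mul _ _ fun u hu =>
      (isConj_finRotate_iff hn).2 (mem_filter.1 hu).2.1]
  congr 1
  ext t
  have hcomm : ⁅finRotate n, t⁆ = finRotate n * (t * finRotate n * t⁻¹)⁻¹ := by
    rw [commutatorElement_def]; group
  simp only [mem_filter, mem_univ, true_and, hcomm,
    (isConj_finRotate_iff hn).1 (isConj_iff.2 ⟨t, rfl⟩)]

end Fin

/-- The number of pairs `(s,t) ∈ Sₙ × Sₙ` whose commutator is a 3-cycle and with `s` an
`n`-cycle equals `C(n,3)·n!`. -/
theorem stmt_18 (n : ℕ) :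
    Nat.card {p : Equiv.Perm (Fin n) × Equiv.Perm (Fin n) //
      (p.1 * p.2 * p.1⁻¹ * p.2⁻¹).IsThreeCycle ∧ p.1.IsCycle ∧ p.1.support.card = n}
      = n.choose 3 * n.factorial := by
  classical
  rcases lt_or_ge n 3 with hn | hn
  · rw [Nat.choose_eq_zero_of_lt hn, zero_mul, Nat.card_eq_zero]
    refine Or.inl ⟨fun ⟨p, h, _⟩ => ?_⟩
    have := h.card_support ▸ card_le_univ (p.1 * p.2 * p.1⁻¹ * p.2⁻¹).support
    rw [Fintype.card_fin] at this
    omega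
  have hconj : ∀ g x : Perm (Fin n), IsThreeCycle (g * x * g⁻¹) ↔ IsThreeCycle x :=
    fun g x => by simp only [IsThreeCycle, cycleType_conj]
  refine (Nat.card_subtype_prod_eq_sum (fun s t : Perm (Fin n) => IsThreeCycle ⁅s, t⁆)
    fun s => s.IsCycle ∧ #s.support = n).trans ?_
  rw [sum_congr rfl fun s hs => (card_filter_commutatorElement_eq_of_isConj hconj
      ((Fin.isConj_finRotate_iff (by omega)).2 (mem_filter.1 hs).2)).symm,
    sum_const, smul_eq_mul, Fin.card_filter_isThreeCycle_commutatorElement_finRotate (by omega),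
    ← Fin.card_isCycle_mul_card_centralizer_finRotate (n := n) (by omega)]
  ring
end
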